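/- Let λ = (λ₁,λ₂,λ₃) ∈ ℂ³ with λ₁+λ₂+λ₃ = 0, and let Re λ := (Re λ₁, Re λ₂, Re λ₃) (which also sums to 0). Then for all y₁,y₂ > 0, the value W_{Re λ}(y₁,y₂) is real and strictly positive, and |W_λ(y₁,y₂)| ≤ W_{Re λ}(y₁,y₂). -/

import Mathlib

/-
For complex `ν` one has `‖cosh (ν t)‖ ≤ cosh (Re ν · t)`, and `‖x ^ s‖ = x ^ Re s` for `x > 0`;
hence `‖K_ν(u)‖ ≤ K_{Re ν}(u)`, the integrand of `W_λ` is dominated in norm by that of `W_{Re λ}`,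
and the latter is real and positive. What has to be checked is that the real integral converges:
from `K_a(u) ≤ e^{u₀ - u} K_a(u₀)` for `u ≥ u₀` the integrand is `O(x^p e^{-c₁ √x - c₂ / √x})`.
-/
open scoped Real

noncomputable section

/-- The modified Bessel function of the second kind,
`K_ν(u) = ∫₀^∞ e^{-u cosh t} cosh(νt) dt`. -/
def Kbessel (ν : ℂ) (u : ℝ) : ℂ :=
  ∫ t in Set.Ioi (0:ℝ), Complex.exp (-(u : ℂ) * Real.cosh t) * Complex.cosh (ν * t)

/-- The decaying `SL(3)` Whittaker function, via the Vinogradov–Takhtajan formula. -/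
def W (l₁ l₂ l₃ : ℂ) (y₁ y₂ : ℝ) : ℂ :=
  4 * (y₁ : ℂ) ^ (1 - l₂ / 2) * (y₂ : ℂ) ^ (1 + l₂ / 2) *
    ∫ x in Set.Ioi (0:ℝ),
      Kbessel ((l₁ - l₃) / 2) (2 * π * y₁ * Real.sqrt (1 + x)) *
      Kbessel ((l₁ - l₃) / 2) (2 * π * y₂ * Real.sqrt (1 + x⁻¹)) *
      (x : ℂ) ^ (-(3 * l₂ / 4) - 1)

open MeasureTheory Set Real

theorem Real.one_add_sq_div_four_le_cosh (t : ℝ) : 1 + t ^ 2 / 4 ≤ cosh t := by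
  rw [← cosh_abs, ← sq_abs]
  have h₁ := quadratic_le_exp_of_nonneg (abs_nonneg t)
  have h₂ := add_one_le_exp (-|t|)
  rw [cosh_eq]
  nlinarith

theorem Real.cosh_le_exp_abs (x : ℝ) : cosh x ≤ exp |x| := by
  rw [← cosh_abs, cosh_eq]
  have : exp (-|x|) ≤ exp |x| := exp_le_exp.mpr (by linarith [abs_nonneg x])
  linarith

theorem Complex.norm_cosh_le (z : ℂ) : ‖Complex.cosh z‖ ≤ Real.cosh z.re := by
  rw [Complex.cosh, Real.cosh_eq, norm_div, Complex.norm_two]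
  gcongr
  refine (norm_add_le _ _).trans_eq ?_
  rw [Complex.norm_exp, Complex.norm_exp, Complex.neg_re]

def KbesselReal (a u : ℝ) : ℝ :=
  ∫ t in Ioi 0, exp (-(u * cosh t)) * cosh (a * t)

section KbesselReal

variable {u : ℝ}

/-- From `cosh t ≥ 1 + t²/4` and `|a t| ≤ 2a²/u + u t²/8`. -/
theorem exp_neg_mul_cosh_mul_cosh_le (a : ℝ) (hu : 0 < u) (t : ℝ) :
    exp (-(u * cosh t)) * cosh (a * t) ≤ exp (2 * a ^ 2 / u - u) * exp (-(u / 8) * t ^ 2) := by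
  have hcosh := one_add_sq_div_four_le_cosh t
  have hamgm : |a * t| ≤ 2 * a ^ 2 / u + u / 8 * t ^ 2 := by
    rw [abs_mul, div_add' _ _ _ hu.ne', le_div_iff₀ hu]
    nlinarith [sq_nonneg (|a| - u * |t| / 4), sq_abs a, congrArg (u ^ 2 * ·) (sq_abs t)]
  calc exp (-(u * cosh t)) * cosh (a * t) ≤ exp (-(u * cosh t)) * exp |a * t| :=
        mul_le_mul_of_nonneg_left (cosh_le_exp_abs _) (exp_pos _).le
    _ ≤ exp (2 * a ^ 2 / u - u) * exp (-(u / 8) * t ^ 2) := by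
        rw [← exp_add, ← exp_add, exp_le_exp]
        nlinarith [mul_le_mul_of_nonneg_left hcosh hu.le]

theorem integrable_exp_neg_mul_cosh_mul_cosh (a : ℝ) (hu : 0 < u) :
    Integrable (fun t => exp (-(u * cosh t)) * cosh (a * t)) := by
  refine ((integrable_exp_neg_mul_sq (by positivity : 0 < u / 8)).const_mul
    (exp (2 * a ^ 2 / u - u))).mono' (by fun_prop) (ae_of_all _ fun t => ?_)
  rw [norm_of_nonneg (by positivity)]
  exact exp_neg_mul_cosh_mul_cosh_le a hu t

theorem KbesselReal_pos (a : ℝ) (hu : 0 < u) : 0 < KbesselReal a u := by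
  refine setIntegral_pos_iff_support_of_nonneg_ae (ae_of_all _ fun t => by positivity)
    (integrable_exp_neg_mul_cosh_mul_cosh a hu).integrableOn |>.mpr ?_
  have hsupp : Ioi 0 ⊆ Function.support fun t => exp (-(u * cosh t)) * cosh (a * t) :=
    fun t _ => ne_of_gt (by positivity)
  rw [inter_eq_self_of_subset_right hsupp, volume_Ioi]
  exact ENNReal.zero_lt_top

theorem Kbessel_ofReal (a u : ℝ) : Kbessel a u = KbesselReal a u := by
  rw [Kbessel, KbesselReal, ← integral_complex_ofReal]
  congr with t
  push_cast
  ring_nf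

theorem norm_Kbessel_le (ν : ℂ) (hu : 0 < u) : ‖Kbessel ν u‖ ≤ KbesselReal ν.re u := by
  refine norm_integral_le_of_norm_le (integrable_exp_neg_mul_cosh_mul_cosh ν.re hu).integrableOn
    (ae_of_all _ fun t => ?_)
  rw [norm_mul, Complex.norm_exp]
  refine mul_le_mul (by simp) ((Complex.norm_cosh_le _).trans_eq (by simp)) (norm_nonneg _)
    (exp_pos _).le

/-- Pointwise `e^{-u cosh t} ≤ e^{u₀ - u} e^{-u₀ cosh t}`, because `cosh t ≥ 1`. -/
theorem KbesselReal_le_exp_sub_mul (a : ℝ) {u₀ : ℝ} (h₀ : 0 < u₀) (h : u₀ ≤ u) :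
    KbesselReal a u ≤ exp (u₀ - u) * KbesselReal a u₀ := by
  rw [KbesselReal, KbesselReal, ← integral_const_mul]
  refine setIntegral_mono_on (integrable_exp_neg_mul_cosh_mul_cosh a (h₀.trans_le h)).integrableOn
    ((integrable_exp_neg_mul_cosh_mul_cosh a h₀).integrableOn.const_mul _) measurableSet_Ioi
    fun t _ => ?_
  rw [← mul_assoc, ← exp_add]
  gcongr
  nlinarith [one_le_cosh t]

theorem measurable_KbesselReal (a : ℝ) : Measurable (KbesselReal a) :=
  (Continuous.stronglyMeasurable (f := fun p : ℝ × ℝ => exp (-(p.1 * cosh p.2)) * cosh (a * p.2))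
    (by fun_prop)).integral_prod_right'.measurable

end KbesselReal

open Nat in
theorem Real.exp_neg_le_factorial_div_pow {y : ℝ} (hy : 0 < y) (n : ℕ) :
    exp (-y) ≤ n ! / y ^ n := by
  rw [exp_neg, ← inv_div]
  exact inv_anti₀ (by positivity) (pow_div_factorial_le_exp _ hy.le n)

open Nat in
theorem Real.exp_neg_div_sqrt_le {c x : ℝ} (hc : 0 < c) (hx : 0 < x) (n : ℕ) :
    exp (-(c / √x)) ≤ n ! / c ^ n * x ^ ((n : ℝ) / 2) := by
  have hsqrt : √x ^ n = x ^ ((n : ℝ) / 2) := by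
    rw [sqrt_eq_rpow, ← rpow_natCast, ← rpow_mul hx.le, one_div_mul_eq_div]
  calc exp (-(c / √x)) ≤ n ! / (c / √x) ^ n := exp_neg_le_factorial_div_pow (by positivity) n
    _ = n ! / c ^ n * x ^ ((n : ℝ) / 2) := by rw [div_pow, ← hsqrt]; field_simp

/-- At `0` the factor `e^{-c₂/√x}` beats any power of `x`, so only the decay at `∞` matters. -/
theorem integrableOn_rpow_mul_exp_neg_mul_sqrt_mul_exp_neg_div_sqrt (p : ℝ) {c₁ c₂ : ℝ}
    (hc₁ : 0 < c₁) (hc₂ : 0 < c₂) :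
    IntegrableOn (fun x => x ^ p * exp (-(c₁ * √x)) * exp (-(c₂ / √x))) (Ioi 0) := by
  set n := ⌈-2 * p⌉₊
  have hs : -1 < p + (n : ℝ) / 2 := by linarith [Nat.le_ceil (-2 * p)]
  refine ((integrableOn_rpow_mul_exp_neg_mul_rpow hs one_half_pos hc₁).const_mul
    (n.factorial / c₂ ^ n)).mono' (by fun_prop) ?_
  refine (ae_restrict_iff' measurableSet_Ioi).mpr (ae_of_all _ fun x (hx : 0 < x) => ?_)
  rw [norm_of_nonneg (by positivity), rpow_add hx, ← sqrt_eq_rpow]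
  calc x ^ p * exp (-(c₁ * √x)) * exp (-(c₂ / √x))
      ≤ x ^ p * exp (-(c₁ * √x)) * (n.factorial / c₂ ^ n * x ^ ((n : ℝ) / 2)) := by
        gcongr
        exact exp_neg_div_sqrt_le hc₂ hx n
    _ = n.factorial / c₂ ^ n * (x ^ p * x ^ ((n : ℝ) / 2) * exp (-c₁ * √x)) := by ring_nf

theorem KbesselReal_mul_sqrt_one_add_le (a : ℝ) {c x : ℝ} (hc : 0 < c) (hx : 0 ≤ x) :
    KbesselReal a (c * √(1 + x)) ≤ exp c * KbesselReal a c * exp (-(c * √x)) := by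
  have hle : c ≤ c * √(1 + x) := le_mul_of_one_le_right hc.le (one_le_sqrt.mpr (by linarith))
  have hsqrt : c * √x ≤ c * √(1 + x) := by gcongr; linarith
  calc KbesselReal a (c * √(1 + x)) ≤ exp (c - c * √(1 + x)) * KbesselReal a c :=
        KbesselReal_le_exp_sub_mul a hc hle
    _ ≤ exp (c - c * √x) * KbesselReal a c := by
        gcongr
        exact (KbesselReal_pos a hc).le
    _ = exp c * KbesselReal a c * exp (-(c * √x)) := by rw [sub_eq_add_neg, exp_add]; ring

def whittakerIntegrand (a p y₁ y₂ x : ℝ) : ℝ :=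
  KbesselReal a (2 * π * y₁ * √(1 + x)) * KbesselReal a (2 * π * y₂ * √(1 + x⁻¹)) * x ^ p

section whittakerIntegrand

variable (a p : ℝ) {y₁ y₂ : ℝ}

theorem whittakerIntegrand_pos (h₁ : 0 < y₁) (h₂ : 0 < y₂) {x : ℝ} (hx : 0 < x) :
    0 < whittakerIntegrand a p y₁ y₂ x := by
  have := KbesselReal_pos a (u := 2 * π * y₁ * √(1 + x)) (by positivity)
  have := KbesselReal_pos a (u := 2 * π * y₂ * √(1 + x⁻¹)) (by positivity)
  unfold whittakerIntegrand
  positivity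

theorem whittakerIntegrand_le (h₁ : 0 < y₁) (h₂ : 0 < y₂) {x : ℝ} (hx : 0 < x) :
    whittakerIntegrand a p y₁ y₂ x ≤
      exp (2 * π * y₁) * KbesselReal a (2 * π * y₁) *
        (exp (2 * π * y₂) * KbesselReal a (2 * π * y₂)) *
        (x ^ p * exp (-(2 * π * y₁ * √x)) * exp (-(2 * π * y₂ / √x))) := by
  have hK₁ := KbesselReal_mul_sqrt_one_add_le a (c := 2 * π * y₁) (by positivity) hx.le
  have hK₂ :=
    KbesselReal_mul_sqrt_one_add_le a (c := 2 * π * y₂) (by positivity) (inv_pos.mpr hx).le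
  rw [sqrt_inv, ← div_eq_mul_inv] at hK₂
  have hK₀ := KbesselReal_pos a (u := 2 * π * y₁) (by positivity)
  calc whittakerIntegrand a p y₁ y₂ x
      ≤ exp (2 * π * y₁) * KbesselReal a (2 * π * y₁) * exp (-(2 * π * y₁ * √x)) *
          (exp (2 * π * y₂) * KbesselReal a (2 * π * y₂) * exp (-(2 * π * y₂ / √x))) * x ^ p := by
        unfold whittakerIntegrand
        gcongr
        exact (KbesselReal_pos a (by positivity)).le
    _ = _ := by ring

theorem integrableOn_whittakerIntegrand (h₁ : 0 < y₁) (h₂ : 0 < y₂) :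
    IntegrableOn (whittakerIntegrand a p y₁ y₂) (Ioi 0) := by
  refine ((integrableOn_rpow_mul_exp_neg_mul_sqrt_mul_exp_neg_div_sqrt p
    (c₁ := 2 * π * y₁) (c₂ := 2 * π * y₂) (by positivity) (by positivity)).const_mul
    (exp (2 * π * y₁) * KbesselReal a (2 * π * y₁) *
      (exp (2 * π * y₂) * KbesselReal a (2 * π * y₂)))).mono'
    ?_ ((ae_restrict_iff' measurableSet_Ioi).mpr (ae_of_all _ fun x (hx : 0 < x) => ?_))
  · have := measurable_KbesselReal a
    exact (by unfold whittakerIntegrand; fun_prop : Measurable _).aestronglyMeasurable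
  · rw [norm_of_nonneg (whittakerIntegrand_pos a p h₁ h₂ hx).le]
    exact whittakerIntegrand_le a p h₁ h₂ hx

theorem integral_whittakerIntegrand_pos (h₁ : 0 < y₁) (h₂ : 0 < y₂) :
    0 < ∫ x in Ioi 0, whittakerIntegrand a p y₁ y₂ x := by
  refine (setIntegral_pos_iff_support_of_nonneg_ae
    ((ae_restrict_iff' measurableSet_Ioi).mpr (ae_of_all _ fun x hx =>
      (whittakerIntegrand_pos a p h₁ h₂ hx).le))
    (integrableOn_whittakerIntegrand a p h₁ h₂)).mpr ?_
  have hsupp : Ioi 0 ⊆ Function.support (whittakerIntegrand a p y₁ y₂) :=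
    fun x hx => (whittakerIntegrand_pos a p h₁ h₂ hx).ne'
  rw [inter_eq_self_of_subset_right hsupp, volume_Ioi]
  exact ENNReal.zero_lt_top

end whittakerIntegrand

def Wreal (l₁ l₂ l₃ y₁ y₂ : ℝ) : ℝ :=
  4 * y₁ ^ (1 - l₂ / 2) * y₂ ^ (1 + l₂ / 2) *
    ∫ x in Ioi 0, whittakerIntegrand ((l₁ - l₃) / 2) (-(3 * l₂ / 4) - 1) y₁ y₂ x

section Wreal

variable {y₁ y₂ : ℝ}

theorem W_ofReal (l₁ l₂ l₃ : ℝ) (h₁ : 0 ≤ y₁) (h₂ : 0 ≤ y₂) :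
    W l₁ l₂ l₃ y₁ y₂ = Wreal l₁ l₂ l₃ y₁ y₂ := by
  have hintegrand : EqOn
      (fun x : ℝ => Kbessel ((l₁ - l₃ : ℂ) / 2) (2 * π * y₁ * √(1 + x)) *
        Kbessel ((l₁ - l₃ : ℂ) / 2) (2 * π * y₂ * √(1 + x⁻¹)) * (x : ℂ) ^ (-(3 * (l₂ : ℂ) / 4) - 1))
      (fun x => (whittakerIntegrand ((l₁ - l₃) / 2) (-(3 * l₂ / 4) - 1) y₁ y₂ x : ℂ)) (Ioi 0) :=
    fun x (hx : 0 < x) => by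
      dsimp only
      rw [whittakerIntegrand, Complex.ofReal_mul, Complex.ofReal_mul, ← Kbessel_ofReal,
        ← Kbessel_ofReal, Complex.ofReal_cpow hx.le]
      push_cast
      rfl
  rw [W, setIntegral_congr_fun measurableSet_Ioi hintegrand, integral_complex_ofReal, Wreal]
  push_cast [Complex.ofReal_cpow h₁, Complex.ofReal_cpow h₂]
  rfl

theorem Wreal_pos (l₁ l₂ l₃ : ℝ) (h₁ : 0 < y₁) (h₂ : 0 < y₂) : 0 < Wreal l₁ l₂ l₃ y₁ y₂ := by
  have := integral_whittakerIntegrand_pos ((l₁ - l₃) / 2) (-(3 * l₂ / 4) - 1) h₁ h₂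
  unfold Wreal
  positivity

theorem norm_W_le_Wreal (l₁ l₂ l₃ : ℂ) (h₁ : 0 < y₁) (h₂ : 0 < y₂) :
    ‖W l₁ l₂ l₃ y₁ y₂‖ ≤ Wreal l₁.re l₂.re l₃.re y₁ y₂ := by
  have hintegrand : ∀ x ∈ Ioi (0 : ℝ),
      ‖Kbessel ((l₁ - l₃) / 2) (2 * π * y₁ * √(1 + x)) *
        Kbessel ((l₁ - l₃) / 2) (2 * π * y₂ * √(1 + x⁻¹)) * (x : ℂ) ^ (-(3 * l₂ / 4) - 1)‖ ≤
      whittakerIntegrand ((l₁.re - l₃.re) / 2) (-(3 * l₂.re / 4) - 1) y₁ y₂ x := by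
    intro x (hx : 0 < x)
    rw [norm_mul, norm_mul, Complex.norm_cpow_eq_rpow_re_of_pos hx, whittakerIntegrand]
    have hK₁ := norm_Kbessel_le ((l₁ - l₃) / 2) (u := 2 * π * y₁ * √(1 + x)) (by positivity)
    have hK₂ := norm_Kbessel_le ((l₁ - l₃) / 2) (u := 2 * π * y₂ * √(1 + x⁻¹)) (by positivity)
    have hexp : (-(3 * l₂ / 4) - 1 : ℂ).re = -(3 * l₂.re / 4) - 1 := by simp
    simp only [Complex.div_ofNat_re, Complex.sub_re] at hK₁ hK₂
    rw [hexp]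
    gcongr
    exact (KbesselReal_pos _ (by positivity)).le
  have hintegral := norm_integral_le_of_norm_le
    (integrableOn_whittakerIntegrand ((l₁.re - l₃.re) / 2) (-(3 * l₂.re / 4) - 1) h₁ h₂)
    ((ae_restrict_iff' measurableSet_Ioi).mpr (ae_of_all _ hintegrand))
  rw [W, Wreal, norm_mul, norm_mul, norm_mul, Complex.norm_cpow_eq_rpow_re_of_pos h₁,
    Complex.norm_cpow_eq_rpow_re_of_pos h₂]
  simp only [Complex.norm_ofNat, Complex.sub_re, Complex.add_re, Complex.one_re,
    Complex.div_ofNat_re]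
  gcongr

end Wreal

theorem statement9_general (l₁ l₂ l₃ : ℂ)
    (y₁ y₂ : ℝ) (h₁ : 0 < y₁) (h₂ : 0 < y₂) :
    (W (l₁.re : ℂ) (l₂.re : ℂ) (l₃.re : ℂ) y₁ y₂).im = 0 ∧
    0 < (W (l₁.re : ℂ) (l₂.re : ℂ) (l₃.re : ℂ) y₁ y₂).re ∧
    ‖W l₁ l₂ l₃ y₁ y₂‖ ≤ (W (l₁.re : ℂ) (l₂.re : ℂ) (l₃.re : ℂ) y₁ y₂).re := by
  rw [W_ofReal _ _ _ h₁.le h₂.le, Complex.ofReal_im, Complex.ofReal_re]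
  exact ⟨rfl, Wreal_pos _ _ _ h₁ h₂, norm_W_le_Wreal l₁ l₂ l₃ h₁ h₂⟩

theorem statement9 (l₁ l₂ l₃ : ℂ) (hsum : l₁ + l₂ + l₃ = 0)
    (y₁ y₂ : ℝ) (h₁ : 0 < y₁) (h₂ : 0 < y₂) :
    (W (l₁.re : ℂ) (l₂.re : ℂ) (l₃.re : ℂ) y₁ y₂).im = 0 ∧
    0 < (W (l₁.re : ℂ) (l₂.re : ℂ) (l₃.re : ℂ) y₁ y₂).re ∧
    ‖W l₁ l₂ l₃ y₁ y₂‖ ≤ (W (l₁.re : ℂ) (l₂.re : ℂ) (l₃.re : ℂ) y₁ y₂).re :=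
  statement9_general l₁ l₂ l₃ y₁ y₂ h₁ h₂
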